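/- arXiv:2510.25442 — 4 statements merged into one kernel-verified Lean document; each statement's English description precedes it below -/
import Mathlib

section
/- Let N ∈ ℕ and let f : 𝕋 → [0,∞) be continuous with pointwise cosine expansion f(t) = Σ_{m=0}^∞ a_m cos(2πmt), where a_m ≥ 0 for all m > 0 and a_m = 0 for all m > 0 divisible by N. Then for all points x^0, x^1, …, x^{N−1} ∈ [0,1) one has E_f(x^0,…,x^{N−1}) ≥ E_f(0/N, 1/N, …, (N−1)/N). -/
open Finset Real

/-- Pairwise interaction energy of `N` points on the circle `𝕋 = ℝ/ℤ ≃ [0,1)`: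
`E_f(x^0,…,x^{N-1}) = Σ_{k ≠ ℓ} f(x^k − x^ℓ)`. -/
noncomputable def energy1 {N : ℕ} (f : ℝ → ℝ) (x : Fin N → ℝ) : ℝ :=
  ∑ k : Fin N, ∑ ℓ : Fin N, if k = ℓ then 0 else f (x k - x ℓ)

/-!
Expanding `f` in its cosine series, `E_f = Σ_m a_m E_{cos(2πm·)}`, and
`E_{cos(2πm·)}(x) = |Σ_k e^{2πimx^k}|² − N ≥ −N`. For `N ∤ m` the equispaced points make the
exponential sum a full sum of the powers of a nontrivial `N`-th root of unity, so they attain the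
bound `−N`; the modes with `N ∣ m, m > 0` do not contribute, and the constant mode `m = 0` does not
depend on the points.
-/

lemma energy1_eq_sum_sub {N : ℕ} (g : ℝ → ℝ) (y : Fin N → ℝ) :
    energy1 g y = ∑ k, ∑ ℓ, g (y k - y ℓ) - N * g 0 := by
  have hdiag : ∀ k ℓ : Fin N, (if k = ℓ then 0 else g (y k - y ℓ))
      = g (y k - y ℓ) - if k = ℓ then g (y k - y ℓ) else 0 := by
    intro k ℓ
    split_ifs <;> simp
  simp only [energy1, hdiag, sum_sub_distrib, sum_ite_eq, mem_univ, if_true, sub_self, sum_const,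
    card_univ, Fintype.card_fin, nsmul_eq_mul]

lemma energy1_const_mul {N : ℕ} (c : ℝ) (g : ℝ → ℝ) (y : Fin N → ℝ) :
    energy1 (fun t => c * g t) y = c * energy1 g y := by
  simp only [energy1, mul_sum, mul_ite, mul_zero]

lemma hasSum_energy1 {N : ℕ} {ι : Type*} {f : ℝ → ℝ} {φ : ι → ℝ → ℝ}
    (hφ : ∀ t, HasSum (fun i => φ i t) (f t)) (y : Fin N → ℝ) :
    HasSum (fun i => energy1 (φ i) y) (energy1 f y) := by
  refine hasSum_sum fun k _ => hasSum_sum fun ℓ _ => ?_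
  split_ifs
  · exact hasSum_zero
  · exact hφ _

lemma sum_sum_cos_sub_eq_normSq {N : ℕ} (c : ℝ) (y : Fin N → ℝ) :
    ∑ k, ∑ ℓ, cos (c * (y k - y ℓ))
      = Complex.normSq (∑ k, Complex.exp (↑(c * y k) * Complex.I)) := by
  rw [Complex.normSq_apply, Complex.re_sum, Complex.im_sum, sum_mul_sum, sum_mul_sum,
    ← sum_add_distrib]
  refine sum_congr rfl fun k _ => ?_
  rw [← sum_add_distrib]
  refine sum_congr rfl fun ℓ _ => ?_
  simp only [Complex.exp_ofReal_mul_I_re, Complex.exp_ofReal_mul_I_im, mul_sub, cos_sub]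

lemma energy1_cos_mul {N : ℕ} (c : ℝ) (y : Fin N → ℝ) :
    energy1 (fun t => cos (c * t)) y
      = Complex.normSq (∑ k, Complex.exp (↑(c * y k) * Complex.I)) - N := by
  rw [energy1_eq_sum_sub, sum_sum_cos_sub_eq_normSq, mul_zero, cos_zero, mul_one]

lemma geom_sum_eq_zero_of_pow_eq_one {R : Type*} [CommRing R] [IsDomain R] {z : R} {n : ℕ}
    (hz : z ^ n = 1) (hz1 : z ≠ 1) : ∑ i ∈ range n, z ^ i = 0 := by
  refine eq_zero_of_ne_zero_of_mul_left_eq_zero (sub_ne_zero_of_ne hz1.symm) ?_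
  rw [mul_neg_geom_sum, hz, sub_self]

lemma sum_exp_equispaced_eq_zero {N m : ℕ} (hm : ¬ N ∣ m) :
    ∑ k : Fin N, Complex.exp (↑(2 * π * m * ((k : ℕ) / N)) * Complex.I) = 0 := by
  rcases eq_or_ne N 0 with rfl | hN
  · simp
  set ζ := Complex.exp (2 * π * Complex.I / N)
  have hζ : IsPrimitiveRoot ζ N := Complex.isPrimitiveRoot_exp N hN
  have hpow : ∀ k : ℕ, Complex.exp (↑(2 * π * m * (k / N)) * Complex.I) = (ζ ^ m) ^ k := by
    intro k
    rw [← pow_mul, ← Complex.exp_nat_mul]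
    congr 1
    push_cast
    ring
  simp only [hpow]
  rw [Fin.sum_univ_eq_sum_range (fun k => (ζ ^ m) ^ k)]
  refine geom_sum_eq_zero_of_pow_eq_one ?_ (mt (hζ.pow_eq_one_iff_dvd m).mp hm)
  rw [← pow_mul, mul_comm, pow_mul, hζ.pow_eq_one, one_pow]

lemma energy1_cos_equispaced_le {N m : ℕ} (hm : ¬ N ∣ m) (y : Fin N → ℝ) :
    energy1 (fun t => cos (2 * π * m * t)) (fun k : Fin N => ((k : ℕ) : ℝ) / N)
      ≤ energy1 (fun t => cos (2 * π * m * t)) y := by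
  rw [energy1_cos_mul, energy1_cos_mul, sum_exp_equispaced_eq_zero hm, map_zero]
  exact sub_le_sub_right (Complex.normSq_nonneg _) _

theorem equispaced_minimize_of_nonneg_coefficients_general (N : ℕ) (f : ℝ → ℝ) (a : ℕ → ℝ)
    (hf_sum : ∀ t : ℝ, HasSum (fun m : ℕ => a m * Real.cos (2 * π * (m : ℝ) * t)) (f t))
    (ha_nonneg : ∀ m : ℕ, 0 < m → 0 ≤ a m)
    (ha_zero : ∀ m : ℕ, 0 < m → N ∣ m → a m = 0)
    (x : Fin N → ℝ) :
    energy1 f x ≥ energy1 f (fun k : Fin N => ((k : ℕ) : ℝ) / N) := by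
  refine hasSum_le (fun m => ?_) (hasSum_energy1 hf_sum _) (hasSum_energy1 hf_sum x)
  simp only [energy1_const_mul]
  rcases Nat.eq_zero_or_pos m with rfl | hm
  · simp [energy1]
  by_cases hNm : N ∣ m
  · simp [ha_zero m hm hNm]
  · exact mul_le_mul_of_nonneg_left (energy1_cos_equispaced_le hNm x) (ha_nonneg m hm)

/-- If `f : 𝕋 → ℝ` is continuous with pointwise cosine expansion
`f(t) = Σ_{m≥0} a_m cos(2πmt)` where `a_m ≥ 0` for all `m > 0` and `a_m = 0`
for all `m > 0` divisible by `N`, then the `N` equispaced points minimize the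
energy `E_f` on the circle. -/
theorem equispaced_minimize_of_nonneg_coefficients (N : ℕ) (f : ℝ → ℝ) (a : ℕ → ℝ)
    (hf_cont : Continuous f)
    (hf_per : Function.Periodic f 1)
    (hf_sum : ∀ t : ℝ, HasSum (fun m : ℕ => a m * Real.cos (2 * π * (m : ℝ) * t)) (f t))
    (ha_nonneg : ∀ m : ℕ, 0 < m → 0 ≤ a m)
    (ha_zero : ∀ m : ℕ, 0 < m → N ∣ m → a m = 0)
    (x : Fin N → ℝ) (hx : ∀ k, x k ∈ Set.Ico (0 : ℝ) 1) :
    energy1 f x ≥ energy1 f (fun k : Fin N => ((k : ℕ) : ℝ) / N) :=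
  equispaced_minimize_of_nonneg_coefficients_general N f a hf_sum ha_nonneg ha_zero x
end

section
/- Let X ⊆ 𝕋^d be a Latin hypercube set with N points having a single distance vector, and let (ρ_1,…,ρ_d) be its common distance vector. Then for every integer r with 1 ≤ r ≤ ⌊N/2⌋, the number of indices i ∈ {1,…,d} with ρ_i = r/N equals 2d/(N−1) if r < N/2, and equals d/(N−1) if r = N/2. -/
open Finset Real

open scoped Classical

/-- Geodesic distance on the torus `𝕋 = ℝ/ℤ ≃ [0,1)`:
`δ(x,y) = min{|x−y|, 1−|x−y|}`. -/
noncomputable def torusDist (x y : ℝ) : ℝ := min |x - y| (1 - |x - y|)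

/-- The distance vector of two points of `𝕋^d`, as the (unordered) multiset of
coordinatewise geodesic distances; this encodes the vector
`(δ(x_i, y_i))_{i=1}^d` sorted in increasing order. -/
noncomputable def distVec {d : ℕ} (x y : Fin d → ℝ) : Multiset ℝ :=
  Multiset.map (fun i => torusDist (x i) (y i)) Finset.univ.val

/-!
Double counting. Fix a point `x k` and count the pairs `(ℓ, i)` with `ℓ ≠ k` and
`δ(x k i, x ℓ i) = r/N`. Since every distance vector equals `ρ`, each of the `N - 1` points `ℓ`
contributes the number of indices with `ρ i = r/N`. Since `σ i` is a permutation, in each of the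
`d` coordinates the values `σ i ℓ / N` run over all of `{0, 1/N, …, (N-1)/N}`, of which exactly
two lie at distance `r/N` from `σ i k / N` (namely `(σ i k ± r)/N` mod 1), or one when `2r = N`.
-/

lemma torusDist_self (x : ℝ) : torusDist x x = 0 := by simp [torusDist]

lemma torusDist_eq_iff {x y t : ℝ} (ht : 2 * t ≤ 1) :
    torusDist x y = t ↔ |x - y| = t ∨ |x - y| = 1 - t := by
  unfold torusDist
  constructor
  · intro h
    rcases min_choice |x - y| (1 - |x - y|) with h' | h' <;> rw [h'] at h
    · exact .inl h
    · exact .inr (by linarith)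
  · rintro (h | h) <;> rw [h]
    · exact min_eq_left (by linarith)
    · rw [min_eq_right (by linarith)]; ring

lemma torusDist_natCast_div_eq_iff {N r : ℕ} (hN : 0 < N) (hr : 2 * r ≤ N) (a b : ℕ) :
    torusDist ((a : ℝ) / N) ((b : ℝ) / N) = (r : ℝ) / N ↔
      ((a : ℤ) - b).natAbs = r ∨ ((a : ℤ) - b).natAbs = N - r := by
  have hN' : (0 : ℝ) < N := by exact_mod_cast hN
  have hdist : |(a : ℝ) / N - (b : ℝ) / N| = (((a : ℤ) - b).natAbs : ℝ) / N := by
    rw [div_sub_div_same, abs_div, abs_of_pos hN', Nat.cast_natAbs]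
    push_cast; rfl
  have hcompl : 1 - (r : ℝ) / N = ((N - r : ℕ) : ℝ) / N := by
    rw [Nat.cast_sub (by omega)]; field_simp
  rw [torusDist_eq_iff (by rw [← mul_div_assoc, div_le_one hN']; exact_mod_cast hr), hdist, hcompl,
    div_left_inj' hN'.ne', div_left_inj' hN'.ne', Nat.cast_inj, Nat.cast_inj]

lemma card_filter_natAbs_sub_eq {N r : ℕ} (hr : 1 ≤ r) (h2r : 2 * r ≤ N) (a : Fin N) :
    #{b : Fin N | ((a : ℤ) - b).natAbs = r ∨ ((a : ℤ) - b).natAbs = N - r} =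
      if 2 * r < N then 2 else 1 := by
  have ha := a.isLt
  let up : Fin N := ⟨if a + r < N then a + r else a + r - N, by split <;> omega⟩
  let down : Fin N := ⟨if r ≤ a then a - r else a + N - r, by split <;> omega⟩
  have hfilter : ({b : Fin N | ((a : ℤ) - b).natAbs = r ∨ ((a : ℤ) - b).natAbs = N - r} : Finset _)
      = {up, down} := by
    ext b
    have hb := b.isLt
    simp only [mem_filter, mem_univ, true_and, mem_insert, mem_singleton, Fin.ext_iff, up, down]
    split <;> split <;> omega
  rw [hfilter]
  split_ifs with h
  · exact card_pair (by simp only [ne_eq, Fin.ext_iff, up, down]; split <;> split <;> omega)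
  · have : up = down := by simp only [Fin.ext_iff, up, down]; split <;> split <;> omega
    simp [this]

lemma card_filter_torusDist_perm_eq {N r : ℕ} (hr : 1 ≤ r) (h2r : 2 * r ≤ N)
    (τ : Equiv.Perm (Fin N)) (k : Fin N) :
    #{ℓ : Fin N | torusDist ((τ k : ℕ) / N : ℝ) ((τ ℓ : ℕ) / N) = r / N} =
      if 2 * r < N then 2 else 1 := by
  rw [← card_filter_natAbs_sub_eq hr h2r (τ k)]
  refine card_equiv τ fun ℓ => ?_
  simp only [mem_filter, mem_univ, true_and, torusDist_natCast_div_eq_iff (by omega) h2r]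

lemma card_filter_eq_of_map_eq {ι β : Type*} [Fintype ι] {f g : ι → β}
    (h : Multiset.map f univ.val = Multiset.map g univ.val) (v : β) :
    #{i | f i = v} = #{i | g i = v} := by
  simpa [Multiset.count_map, eq_comm, Finset.card] using congrArg (Multiset.count v) h

lemma card_filter_mul_card_eq_sum {ι κ β : Type*} [Fintype ι] {s : Finset κ} {g : κ → ι → β}
    {ρ : ι → β} (hg : ∀ ℓ ∈ s, Multiset.map (g ℓ) univ.val = Multiset.map ρ univ.val) (v : β) :
    #{i | ρ i = v} * #s = ∑ i, #{ℓ ∈ s | g ℓ i = v} :=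
  calc #{i | ρ i = v} * #s = ∑ ℓ ∈ s, #{i | g ℓ i = v} := by
        rw [sum_congr rfl fun ℓ hℓ => card_filter_eq_of_map_eq (hg ℓ hℓ) v, sum_const, smul_eq_mul,
          mul_comm]
    _ = ∑ i, #{ℓ ∈ s | g ℓ i = v} :=
        sum_card_bipartiteAbove_eq_sum_card_bipartiteBelow fun ℓ i => g ℓ i = v

/-- Counting entries of the common distance vector of a Latin hypercube set
`X = {(σ_1(k)/N, …, σ_d(k)/N)}` with a single distance vector `(ρ_1,…,ρ_d)`:
for `1 ≤ r ≤ ⌊N/2⌋`, the number of indices `i` with `ρ_i = r/N` equals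
`2d/(N−1)` if `r < N/2` and `d/(N−1)` if `r = N/2` (stated multiplied through
by `N−1`). -/
theorem latin_hypercube_single_distVec_count (N d : ℕ)
    (σ : Fin d → Equiv.Perm (Fin N)) (ρ : Fin d → ℝ)
    (x : Fin N → Fin d → ℝ)
    (hx : ∀ k i, x k i = ((σ i k : ℕ) : ℝ) / N)
    (hsingle : ∀ k ℓ : Fin N, k ≠ ℓ →
      distVec (x k) (x ℓ) = Multiset.map ρ Finset.univ.val)
    (r : ℕ) (hr1 : 1 ≤ r) (hr2 : r ≤ N / 2) :
    (Finset.univ.filter (fun i : Fin d => ρ i = (r : ℝ) / N)).card * (N - 1)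
      = if 2 * r < N then 2 * d else d := by
  have h2r : 2 * r ≤ N := by omega
  have hrN : (r : ℝ) / N ≠ 0 := div_ne_zero (by norm_cast; omega) (by norm_cast; omega)
  let k : Fin N := ⟨0, by omega⟩
  have hcount := card_filter_mul_card_eq_sum (s := univ.erase k)
    (g := fun ℓ i => torusDist (x k i) (x ℓ i))
    (fun ℓ hℓ => hsingle k ℓ (ne_of_mem_erase hℓ).symm) ((r : ℝ) / N)
  have hcoord : ∀ i, #{ℓ ∈ univ.erase k | torusDist (x k i) (x ℓ i) = r / N} =
      if 2 * r < N then 2 else 1 := by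
    intro i
    rw [filter_erase, erase_eq_of_notMem (by simp [torusDist_self, hrN.symm])]
    simpa only [hx] using card_filter_torusDist_perm_eq hr1 h2r (σ i) k
  rw [card_erase_of_mem (mem_univ k), card_univ, Fintype.card_fin] at hcount
  rw [hcount, sum_congr rfl fun i _ => hcoord i]
  split_ifs <;> simp [mul_comm]
end

section
/- Let X ⊆ 𝕋^d be a Latin hypercube set with N points having a single distance vector, and for 0 < p ≤ 6 let f_p(t) = 1 + (p/2)(1/6 − t + t²) for t ∈ [0,1), extended 1-periodically. Then X minimizes the tensor product energy E_{F_p} with potential f_p among all N-point configurations on 𝕋^d. -/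
/-!
Write `f_p = exp ∘ h ∘ Int.fract` with `h = log (1 + (p/2)(1/6 − s + s²))`, which is convex on
`[0,1]` for `0 < p ≤ 6` and symmetric under `s ↦ 1 − s`. The energy is then a sum of `exp` of the
pair log-energies `Σ_i h(fract(y_i^k − y_i^ℓ))`. By symmetry of `h` these only depend on the
distance vector, so for `X` they all take one value `c`, and the tangent line of `exp` at `c`
reduces the claim to comparing the total log-energies. Those split into one-dimensional pair
sums, one per coordinate. In one dimension, after sorting the points, the pairs at cyclic shift
`m` cut out gaps in `[0,1]` whose lengths add up to `m`, so by Jensen their `h`-sum is at least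
`N h(m/N)`, which is attained by the equispaced grid; every coordinate of a Latin hypercube set
is a permutation of that grid.
-/

open Finset Real

/-- Tensor product energy of `N` points in `𝕋^d ≃ [0,1)^d`:
`E_F(Y) = Σ_{k ≠ ℓ} ∏_i f(y_i^k − y_i^ℓ)`. -/
noncomputable def energyProd {N d : ℕ} (f : ℝ → ℝ) (y : Fin N → Fin d → ℝ) : ℝ :=
  ∑ k : Fin N, ∑ ℓ : Fin N, if k = ℓ then 0 else ∏ i : Fin d, f (y k i - y ℓ i)

/-- A configuration has a single distance vector if all pairs of distinct
points have the same distance vector. -/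
def singleDistVec {N d : ℕ} (x : Fin N → Fin d → ℝ) : Prop :=
  ∀ k ℓ k' ℓ' : Fin N, k ≠ ℓ → k' ≠ ℓ' → distVec (x k) (x ℓ) = distVec (x k') (x ℓ')

/-- The QMC potential `f_p(t) = 1 + (p/2)(1/6 − t + t²)` on `[0,1)`, extended
1-periodically to `ℝ` via the fractional part. -/
noncomputable def qmcPotential (p : ℝ) (t : ℝ) : ℝ :=
  1 + p / 2 * (1 / 6 - Int.fract t + (Int.fract t) ^ 2)

noncomputable def qmcQuadratic (p s : ℝ) : ℝ := 1 + p / 2 * (1 / 6 - s + s ^ 2)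

section Potential

variable {p : ℝ}

lemma qmcQuadratic_pos (hp0 : 0 ≤ p) (hp : p < 24) (s : ℝ) : 0 < qmcQuadratic p s := by
  unfold qmcQuadratic
  nlinarith [mul_nonneg hp0 (sq_nonneg (s - 1 / 2))]

lemma qmcQuadratic_one_sub (p s : ℝ) : qmcQuadratic p (1 - s) = qmcQuadratic p s := by
  unfold qmcQuadratic; ring

lemma qmcPotential_eq_exp_log (hp0 : 0 ≤ p) (hp : p < 24) (t : ℝ) :
    qmcPotential p t = exp (log (qmcQuadratic p (Int.fract t))) :=
  (exp_log (qmcQuadratic_pos hp0 hp _)).symm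

lemma hasDerivAt_qmcQuadratic (p s : ℝ) :
    HasDerivAt (qmcQuadratic p) (p / 2 * (2 * s - 1)) s := by
  have hsq : HasDerivAt (fun s : ℝ => s ^ 2) (2 * s) s := by simpa using hasDerivAt_pow 2 s
  exact ((((hasDerivAt_id s).const_sub (1 / 6)).add hsq).const_mul (p / 2) |>.const_add 1)
    |>.congr_deriv (by ring)

lemma convexOn_log_qmcQuadratic (hp0 : 0 ≤ p) (hp6 : p ≤ 6) :
    ConvexOn ℝ (Set.Icc 0 1) (fun s => log (qmcQuadratic p s)) := by
  have hq := qmcQuadratic_pos hp0 (by linarith)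
  have hlog (s : ℝ) : HasDerivAt (fun s => log (qmcQuadratic p s))
      (p / 2 * (2 * s - 1) / qmcQuadratic p s) s :=
    (hasDerivAt_qmcQuadratic p s).log (hq s).ne'
  have hlog' (s : ℝ) : HasDerivAt (fun s => p / 2 * (2 * s - 1) / qmcQuadratic p s)
      ((p * qmcQuadratic p s - (p / 2 * (2 * s - 1)) ^ 2) / qmcQuadratic p s ^ 2) s := by
    have hnum : HasDerivAt (fun s : ℝ => p / 2 * (2 * s - 1)) p s :=
      (((hasDerivAt_id s).const_mul 2).sub_const 1).const_mul (p / 2) |>.congr_deriv (by simp)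
    exact (hnum.div (hasDerivAt_qmcQuadratic p s) (hq s).ne').congr_deriv (by ring)
  refine convexOn_of_hasDerivWithinAt2_nonneg (convex_Icc 0 1)
    (fun s _ => (hlog s).continuousAt.continuousWithinAt)
    (fun s _ => (hlog s).hasDerivWithinAt) (fun s _ => (hlog' s).hasDerivWithinAt) ?_
  rintro s hs
  rw [interior_Icc] at hs
  have key : p * qmcQuadratic p s - (p / 2 * (2 * s - 1)) ^ 2
      = p * (1 - p / 6) + p ^ 2 * s * (1 - s) / 2 := by unfold qmcQuadratic; ring
  rw [key]
  have hs' : 0 ≤ s * (1 - s) := mul_nonneg hs.1.le (by linarith [hs.2])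
  exact div_nonneg (by nlinarith [mul_nonneg (sq_nonneg p) hs']) (sq_nonneg _)

end Potential

lemma comp_fract_eq_of_mem_Icc {h : ℝ → ℝ} (h01 : h 0 = h 1) {t : ℝ} (ht : t ∈ Set.Icc 0 1) :
    h (Int.fract t) = h t := by
  rcases ht.2.eq_or_lt with rfl | ht1
  · simpa using h01
  · rw [Int.fract_eq_self.2 ⟨ht.1, ht1⟩]

section PairSum

variable {N : ℕ}

noncomputable def pairSum (g : ℝ → ℝ) (w : Fin N → ℝ) : ℝ :=
  ∑ k, ∑ ℓ, if k = ℓ then 0 else g (w k - w ℓ)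

lemma pairSum_comp_perm (g : ℝ → ℝ) (w : Fin N → ℝ) (σ : Equiv.Perm (Fin N)) :
    pairSum g (w ∘ σ) = pairSum g w :=
  Fintype.sum_equiv σ _ _ fun k => Fintype.sum_equiv σ _ _ fun ℓ => by simp

lemma pairSum_eq_sum_shift [NeZero N] (g : ℝ → ℝ) (w : Fin N → ℝ) :
    pairSum g w = ∑ m, if m = 0 then 0 else ∑ ℓ, g (w (ℓ + m) - w ℓ) := by
  have hshift (ℓ : Fin N) : ∑ k, (if k = ℓ then 0 else g (w k - w ℓ))
      = ∑ m, if m = 0 then 0 else g (w (ℓ + m) - w ℓ) :=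
    (Fintype.sum_equiv (Equiv.addLeft ℓ) _ _ fun m => by simp).symm
  rw [pairSum, sum_comm, sum_congr rfl fun ℓ _ => hshift ℓ, sum_comm]
  exact sum_congr rfl fun m _ => by split_ifs <;> simp

/-- For sorted `w` in `[0,1)`, the length of the arc of the circle `ℝ/ℤ` from `w ℓ` to the point
`m` steps further, `w (ℓ + m)`; the `1` is added when the index wraps around. -/
noncomputable def shiftGap (w : Fin N → ℝ) (m ℓ : Fin N) : ℝ :=
  w (ℓ + m) - w ℓ + if N ≤ (ℓ : ℕ) + m then 1 else 0

lemma natCast_val_add_add_mul_ite (ℓ m : Fin N) :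
    (((ℓ + m : Fin N) : ℕ) : ℝ) + N * (if N ≤ (ℓ : ℕ) + m then 1 else 0) = (ℓ : ℕ) + (m : ℕ) := by
  rw [Fin.val_add_eq_ite]
  split_ifs with h
  · push_cast [h]; ring
  · simp

lemma fract_shiftGap (w : Fin N → ℝ) (m ℓ : Fin N) :
    Int.fract (shiftGap w m ℓ) = Int.fract (w (ℓ + m) - w ℓ) := by
  unfold shiftGap
  split_ifs
  · exact Int.fract_add_one _
  · rw [add_zero]

lemma shiftGap_mem_Icc {w : Fin N → ℝ} (hmono : Monotone w) (hw : ∀ k, w k ∈ Set.Ico 0 1)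
    (m ℓ : Fin N) : shiftGap w m ℓ ∈ Set.Icc 0 1 := by
  obtain ⟨h0, h1⟩ := hw ℓ
  obtain ⟨h0', h1'⟩ := hw (ℓ + m)
  have hval := Fin.val_add_eq_ite ℓ m
  unfold shiftGap
  split_ifs with hwrap
  · have : w (ℓ + m) ≤ w ℓ := hmono (by rw [Fin.le_def, hval, if_pos hwrap]; omega)
    constructor <;> linarith
  · have : w ℓ ≤ w (ℓ + m) := hmono (by rw [Fin.le_def, hval, if_neg hwrap]; omega)
    constructor <;> linarith

variable [NeZero N]

-- The index wraps around exactly `m` times, because `Σ_ℓ (ℓ + m) = Σ_ℓ ℓ` in `Fin N`.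
lemma sum_shiftGap (w : Fin N → ℝ) (m : Fin N) : ∑ ℓ, shiftGap w m ℓ = (m : ℕ) := by
  have hw : ∑ ℓ, w (ℓ + m) = ∑ ℓ, w ℓ := Fintype.sum_equiv (Equiv.addRight m) _ _ fun _ => rfl
  have hval : ∑ ℓ : Fin N, (((ℓ + m : Fin N) : ℕ) : ℝ) = ∑ ℓ : Fin N, ((ℓ : ℕ) : ℝ) :=
    Fintype.sum_equiv (Equiv.addRight m) _ _ fun _ => rfl
  have hwraps := Finset.sum_congr rfl fun ℓ (_ : ℓ ∈ univ) => natCast_val_add_add_mul_ite ℓ m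
  rw [sum_add_distrib, sum_add_distrib, hval, ← mul_sum, sum_const, card_univ, Fintype.card_fin,
    nsmul_eq_mul, add_left_cancel_iff, mul_comm] at hwraps
  have hN : (N : ℝ) ≠ 0 := Nat.cast_ne_zero.2 (NeZero.ne N)
  simp only [shiftGap, sum_add_distrib, sum_sub_distrib, hw, sub_self, zero_add]
  exact mul_right_cancel₀ hN (by rw [hwraps, mul_comm])

end PairSum

noncomputable def equispaced (N : ℕ) (k : Fin N) : ℝ := (k : ℕ) / N

lemma monotone_equispaced (N : ℕ) : Monotone (equispaced N) := fun _ _ hkl =>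
  div_le_div_of_nonneg_right (Nat.cast_le.2 hkl) (Nat.cast_nonneg N)

lemma equispaced_mem_Ico {N : ℕ} (k : Fin N) : equispaced N k ∈ Set.Ico 0 1 :=
  ⟨by unfold equispaced; positivity,
    (div_lt_one (Nat.cast_pos.2 (Nat.zero_lt_of_lt k.isLt))).2 (Nat.cast_lt.2 k.isLt)⟩

section Equispaced

variable {N : ℕ} [NeZero N] {h : ℝ → ℝ}

lemma shiftGap_equispaced (m ℓ : Fin N) :
    shiftGap (equispaced N) m ℓ = (m : ℕ) / N := by
  have hN : (N : ℝ) ≠ 0 := Nat.cast_ne_zero.2 (NeZero.ne N)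
  have := natCast_val_add_add_mul_ite ℓ m
  unfold shiftGap equispaced
  field_simp
  linarith

lemma sum_comp_fract_shift_equispaced_le (hconv : ConvexOn ℝ (Set.Icc 0 1) h) (h01 : h 0 = h 1)
    {w : Fin N → ℝ} (hmono : Monotone w) (hw : ∀ k, w k ∈ Set.Ico 0 1) (m : Fin N) :
    ∑ ℓ, h (Int.fract (equispaced N (ℓ + m) - equispaced N ℓ))
      ≤ ∑ ℓ, h (Int.fract (w (ℓ + m) - w ℓ)) := by
  have hgap {v : Fin N → ℝ} (hmono : Monotone v) (hv : ∀ k, v k ∈ Set.Ico 0 1) (ℓ : Fin N) :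
      h (Int.fract (v (ℓ + m) - v ℓ)) = h (shiftGap v m ℓ) := by
    rw [← fract_shiftGap, comp_fract_eq_of_mem_Icc h01 (shiftGap_mem_Icc hmono hv m ℓ)]
  have hN : (0 : ℝ) < N := Nat.cast_pos.2 (Nat.pos_of_ne_zero (NeZero.ne N))
  have hjensen := hconv.map_sum_le (t := univ) (w := fun _ => (N : ℝ)⁻¹)
    (fun _ _ => inv_nonneg.2 hN.le) (by simp [hN.ne']) fun ℓ _ => shiftGap_mem_Icc hmono hw m ℓ
  simp only [smul_eq_mul, ← mul_sum, sum_shiftGap] at hjensen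
  simp only [hgap (monotone_equispaced N) equispaced_mem_Ico, hgap hmono hw, shiftGap_equispaced,
    sum_const, card_univ, Fintype.card_fin, nsmul_eq_mul]
  rwa [div_eq_inv_mul, ← le_inv_mul_iff₀ hN]

lemma pairSum_equispaced_le_of_monotone (hconv : ConvexOn ℝ (Set.Icc 0 1) h) (h01 : h 0 = h 1)
    {w : Fin N → ℝ} (hmono : Monotone w) (hw : ∀ k, w k ∈ Set.Ico 0 1) :
    pairSum (h ∘ Int.fract) (equispaced N) ≤ pairSum (h ∘ Int.fract) w := by
  rw [pairSum_eq_sum_shift, pairSum_eq_sum_shift]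
  refine sum_le_sum fun m _ => ?_
  split_ifs
  · exact le_rfl
  · exact sum_comp_fract_shift_equispaced_le hconv h01 hmono hw m

end Equispaced

lemma pairSum_equispaced_le {N : ℕ} {h : ℝ → ℝ} (hconv : ConvexOn ℝ (Set.Icc 0 1) h)
    (h01 : h 0 = h 1) {w : Fin N → ℝ} (hw : ∀ k, w k ∈ Set.Ico 0 1) :
    pairSum (h ∘ Int.fract) (equispaced N) ≤ pairSum (h ∘ Int.fract) w := by
  obtain _ | N := N
  · simp [pairSum]
  · rw [← pairSum_comp_perm _ w (Tuple.sort w)]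
    exact pairSum_equispaced_le_of_monotone hconv h01 (Tuple.monotone_sort w) fun k => hw _

lemma sum_sum_ite_eq_sum_offDiag {α M : Type*} [Fintype α] [DecidableEq α] [AddCommMonoid M]
    (g : α → α → M) :
    ∑ k, ∑ ℓ, (if k = ℓ then 0 else g k ℓ) = ∑ q ∈ univ.offDiag, g q.1 q.2 := by
  have hoff : (univ : Finset α).offDiag = (univ ×ˢ univ).filter fun q => q.1 ≠ q.2 := by
    ext q; simp
  rw [← sum_product', hoff, sum_filter]
  exact sum_congr rfl fun q _ => (ite_not _ _ _).symm

lemma sum_exp_le_sum_exp_of_const {ι : Type*} (s : Finset ι) {a b : ι → ℝ}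
    (hb : ∀ i ∈ s, ∀ j ∈ s, b i = b j) (hab : ∑ i ∈ s, b i ≤ ∑ i ∈ s, a i) :
    ∑ i ∈ s, exp (b i) ≤ ∑ i ∈ s, exp (a i) := by
  obtain rfl | ⟨j, hj⟩ := s.eq_empty_or_nonempty
  · simp
  calc ∑ i ∈ s, exp (b i) = ∑ i ∈ s, exp (b j) * (b i - b j + 1) :=
        sum_congr rfl fun i hi => by rw [hb i hi j hj]; ring
    _ ≤ ∑ i ∈ s, exp (b j) * (a i - b j + 1) := by
        simp only [← mul_sum, sum_add_distrib, sum_sub_distrib]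
        gcongr
    _ ≤ ∑ i ∈ s, exp (a i) := sum_le_sum fun i _ => by
        simpa [← exp_add] using
          mul_le_mul_of_nonneg_left (add_one_le_exp (a i - b j)) (exp_pos (b j)).le

section Torus

variable {h : ℝ → ℝ}

lemma comp_fract_sub_eq_comp_abs (hsymm : ∀ s, h (1 - s) = h s) {u v : ℝ}
    (hu : u ∈ Set.Ico 0 1) (hv : v ∈ Set.Ico 0 1) : h (Int.fract (u - v)) = h |u - v| := by
  obtain ⟨hu0, hu1⟩ := hu
  obtain ⟨hv0, hv1⟩ := hv
  rcases lt_or_ge u v with huv | huv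
  · rw [abs_of_neg (sub_neg.2 huv), ← Int.fract_add_one,
      Int.fract_eq_self.2 ⟨by linarith, by linarith⟩, ← hsymm]
    ring_nf
  · rw [abs_of_nonneg (sub_nonneg.2 huv), Int.fract_eq_self.2 ⟨by linarith, by linarith⟩]

lemma comp_torusDist_eq_comp_abs (hsymm : ∀ s, h (1 - s) = h s) (u v : ℝ) :
    h (torusDist u v) = h |u - v| := by
  rcases min_choice |u - v| (1 - |u - v|) with hmin | hmin <;> rw [torusDist, hmin]
  exact hsymm _

lemma sum_comp_fract_sub_eq_sum_map_distVec (hsymm : ∀ s, h (1 - s) = h s) {d : ℕ}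
    {u v : Fin d → ℝ} (hu : ∀ i, u i ∈ Set.Ico 0 1) (hv : ∀ i, v i ∈ Set.Ico 0 1) :
    ∑ i, h (Int.fract (u i - v i)) = ((distVec u v).map h).sum := by
  rw [distVec, Multiset.map_map, sum_eq_multiset_sum]
  congr 1
  exact Multiset.map_congr rfl fun i _ => by
    simp [comp_fract_sub_eq_comp_abs hsymm (hu i) (hv i), comp_torusDist_eq_comp_abs hsymm]

end Torus

theorem energyProd_le_of_latinHypercube_of_singleDistVec {h f : ℝ → ℝ}
    (hconv : ConvexOn ℝ (Set.Icc 0 1) h) (hsymm : ∀ s, h (1 - s) = h s)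
    (hf : ∀ t, f t = exp (h (Int.fract t))) {N d : ℕ} (σ : Fin d → Equiv.Perm (Fin N))
    {x : Fin N → Fin d → ℝ} (hx : ∀ k i, x k i = equispaced N (σ i k))
    (hsingle : singleDistVec x) {y : Fin N → Fin d → ℝ} (hy : ∀ k i, y k i ∈ Set.Ico 0 1) :
    energyProd f x ≤ energyProd f y := by
  let logEnergy (z : Fin N → Fin d → ℝ) (q : Fin N × Fin N) : ℝ :=
    ∑ i, h (Int.fract (z q.1 i - z q.2 i))
  have henergy (z : Fin N → Fin d → ℝ) :
      energyProd f z = ∑ q ∈ univ.offDiag, exp (logEnergy z q) := by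
    simp only [energyProd, sum_sum_ite_eq_sum_offDiag, hf, exp_sum, logEnergy]
  have hsum (z : Fin N → Fin d → ℝ) :
      ∑ q ∈ univ.offDiag, logEnergy z q = ∑ i, pairSum (h ∘ Int.fract) (fun k => z k i) := by
    simp only [logEnergy, pairSum, sum_comm (s := univ.offDiag), sum_sum_ite_eq_sum_offDiag,
      Function.comp]
  have hx_eq (i : Fin d) : (fun k => x k i) = equispaced N ∘ σ i := funext fun k => hx k i
  have hxI (k : Fin N) (i : Fin d) : x k i ∈ Set.Ico 0 1 := hx k i ▸ equispaced_mem_Ico (σ i k)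
  rw [henergy, henergy]
  refine sum_exp_le_sum_exp_of_const _ (fun q hq q' hq' => ?_) ?_
  · simp only [logEnergy, sum_comp_fract_sub_eq_sum_map_distVec hsymm (hxI _) (hxI _)]
    rw [hsingle q.1 q.2 q'.1 q'.2 (mem_offDiag.1 hq).2.2 (mem_offDiag.1 hq').2.2]
  · rw [hsum, hsum]
    refine sum_le_sum fun i _ => ?_
    rw [hx_eq, pairSum_comp_perm]
    exact pairSum_equispaced_le hconv (by simpa using hsymm 1) fun k => hy k i

/-- An `N`-point Latin hypercube set with a single distance vector minimizes
the tensor product energy with the QMC potential `f_p` for all `0 < p ≤ 6`. -/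
theorem latin_hypercube_single_distVec_minimizes_qmc (N d : ℕ) (p : ℝ)
    (hp0 : 0 < p) (hp6 : p ≤ 6)
    (σ : Fin d → Equiv.Perm (Fin N))
    (x : Fin N → Fin d → ℝ)
    (hx : ∀ k i, x k i = ((σ i k : ℕ) : ℝ) / N)
    (hsingle : singleDistVec x) :
    ∀ y : Fin N → Fin d → ℝ, (∀ k i, y k i ∈ Set.Ico (0 : ℝ) 1) →
      energyProd (qmcPotential p) y ≥ energyProd (qmcPotential p) x := fun _ hy =>
  energyProd_le_of_latinHypercube_of_singleDistVec (convexOn_log_qmcQuadratic hp0.le hp6)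
    (fun s => by rw [qmcQuadratic_one_sub]) (qmcPotential_eq_exp_log hp0.le (by linarith)) σ hx
    hsingle hy
end

section
/- Let Λ ⊆ 𝕋^d be an N-point integration lattice with N ≥ 3. Then Λ has a single distance vector if and only if N is prime and, up to torus symmetries (permuting coordinates and replacing coordinates x by 1−x), the generating vector of Λ equals (1/N,…,1/N, 2/N,…,2/N, …, n/N,…,n/N), where N = 2n+1, each value j/N (j = 1,…,n) is repeated m times, and d = mn. Conversely, for every prime N = 2n+1 and every m ≥ 1, the lattice in 𝕋^{mn} with this generating vector has a single distance vector. -/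
open Finset Real

/-!
The distance vector of two lattice points depends only on the difference `t` of their indices:
it is the multiset of the `|h_i t| / N`, where `|a|` is the distance from `a` to `0` in `ZMod N`
(`a.valMinAbs.natAbs`). If `N` has a proper prime factor `q`, the vector for `t = q` contains
`|h_1 q|`, which is not `|u|` for any unit `u`, so it differs from the vector for `t = 1`.
For `N` prime, multiplication by `t ≠ 0` permutes the pairs `±u`, so `|u t|` occurs in the
vector for `t` as often as `|u|` in the vector for `t = 1`; hence all vectors coincide iff the
values `1, …, (N - 1) / 2` occur equally often among the `|h_i|`.
-/

lemma torusDist_fract_fract (u v : ℝ) :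
    torusDist (Int.fract u) (Int.fract v) = min (Int.fract (u - v)) (1 - Int.fract (u - v)) := by
  have hu := Int.fract_lt_one u
  have hv := Int.fract_lt_one v
  have hu₀ := Int.fract_nonneg u
  have hv₀ := Int.fract_nonneg v
  have hsub : Int.fract (u - v) = Int.fract (Int.fract u - Int.fract v) := by
    have : u - v = (Int.fract u - Int.fract v) + ((⌊u⌋ - ⌊v⌋ : ℤ) : ℝ) := by
      unfold Int.fract; push_cast; ring
    rw [this, Int.fract_add_intCast]
  rw [hsub, torusDist]
  have hw₁ : -1 < Int.fract u - Int.fract v := by linarith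
  have hw₂ : Int.fract u - Int.fract v < 1 := by linarith
  generalize Int.fract u - Int.fract v = w at hw₁ hw₂ ⊢
  rcases le_or_gt 0 w with hw | hw
  · rw [Int.fract_eq_self.2 ⟨hw, hw₂⟩, abs_of_nonneg hw]
  · rw [← Int.fract_add_one w, Int.fract_eq_self.2 ⟨by linarith, by linarith⟩, abs_of_neg hw,
      min_comm]
    ring_nf

lemma torusDist_fract_intCast_div (N : ℕ) [NeZero N] (a b : ℤ) :
    torusDist (Int.fract ((a : ℝ) / N)) (Int.fract ((b : ℝ) / N))
      = (((a - b : ℤ) : ZMod N).valMinAbs.natAbs : ℝ) / N := by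
  have hN : (0 : ℝ) < N := by exact_mod_cast Nat.pos_of_neZero N
  have hval : (((a - b : ℤ) : ZMod N).val : ℤ) = (a - b) % N := ZMod.val_intCast _
  have hlt := ZMod.val_lt ((a - b : ℤ) : ZMod N)
  rw [torusDist_fract_fract, ← sub_div, ← Int.cast_sub, Int.fract_div_intCast_eq_div_intCast_mod,
    ← hval, Int.cast_natCast, ZMod.valMinAbs_natAbs_eq_min, Nat.cast_min, Nat.cast_sub hlt.le,
    ← min_div_div_right hN.le, sub_div, div_self hN.ne']

namespace ZMod

lemma natAbs_valMinAbs_mul_eq_iff {n : ℕ} {a b t : ZMod n} (ht : IsUnit t) :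
    (a * t).valMinAbs.natAbs = (b * t).valMinAbs.natAbs
      ↔ a.valMinAbs.natAbs = b.valMinAbs.natAbs := by
  rw [natAbs_valMinAbs_eq_natAbs_valMinAbs, natAbs_valMinAbs_eq_natAbs_valMinAbs, ← neg_mul,
    ht.mul_left_inj, ht.mul_left_inj]

lemma natAbs_valMinAbs_natCast_eq_iff {N a j : ℕ} [NeZero N] (hj : j ≤ N / 2) :
    (a : ZMod N).valMinAbs.natAbs = j ↔ a % N = j ∨ a % N = N - j := by
  have := Nat.mod_lt a (Nat.pos_of_neZero N)
  rw [valMinAbs_natAbs_eq_min, val_natCast]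
  omega

lemma natAbs_valMinAbs_natCast {n a : ℕ} (ha : a ≤ n / 2) :
    (a : ZMod n).valMinAbs.natAbs = a := by
  rw [valMinAbs_natCast_of_le_half ha, Int.natAbs_natCast]

lemma natAbs_valMinAbs_mem_Icc {n : ℕ} [NeZero n] {a : ZMod n} (ha : a ≠ 0) :
    a.valMinAbs.natAbs ∈ Icc 1 (n / 2) :=
  mem_Icc.2 ⟨Int.natAbs_pos.2 ((valMinAbs_eq_zero a).not.2 ha), natAbs_valMinAbs_le a⟩

lemma exists_ne_zero_natAbs_valMinAbs_eq {n j : ℕ} (hj : j ∈ Icc 1 (n / 2)) :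
    ∃ u : ZMod n, u ≠ 0 ∧ u.valMinAbs.natAbs = j := by
  rw [mem_Icc] at hj
  have hj' := natAbs_valMinAbs_natCast (n := n) hj.2
  refine ⟨j, fun h₀ => ?_, hj'⟩
  rw [h₀, valMinAbs_zero] at hj'
  omega

end ZMod

section Lattice

variable {N d : ℕ}

def distProfile (c : Fin d → ZMod N) (t : ZMod N) : Multiset ℕ :=
  univ.val.map fun i => (c i * t).valMinAbs.natAbs

lemma count_distProfile (c : Fin d → ZMod N) (t : ZMod N) (j : ℕ) :
    (distProfile c t).count j = #{i | (c i * t).valMinAbs.natAbs = j} := by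
  simp only [distProfile, Multiset.count_map, card_def, filter_val, eq_comm]

lemma distVec_eq_map_distProfile [NeZero N] {h : Fin d → ℕ} {x : Fin N → Fin d → ℝ}
    (hx : ∀ k i, x k i = Int.fract ((h i : ℝ) * ((k : ℕ) : ℝ) / N)) (k ℓ : Fin N) :
    distVec (x k) (x ℓ) = (distProfile (fun i => (h i : ZMod N)) ((k : ℕ) - (ℓ : ℕ))).map
      fun j : ℕ => (j : ℝ) / N := by
  simp only [distVec, distProfile, Multiset.map_map]
  refine Multiset.map_congr rfl fun i _ => ?_
  have hcast (m : Fin N) : (h i : ℝ) * ((m : ℕ) : ℝ) = ((h i * m : ℤ) : ℝ) := by push_cast; rfl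
  rw [Function.comp_apply, hx, hx, hcast, hcast, torusDist_fract_intCast_div]
  push_cast
  ring_nf

lemma exists_natCast_sub_natCast_eq [NeZero N] {t : ZMod N} (ht : t ≠ 0) :
    ∃ k ℓ : Fin N, k ≠ ℓ ∧ ((k : ℕ) - (ℓ : ℕ) : ZMod N) = t := by
  refine ⟨⟨t.val, t.val_lt⟩, ⟨0, Nat.pos_of_neZero N⟩, fun hkℓ => ht ?_, by simp⟩
  simpa using congrArg Fin.val hkℓ

lemma natCast_sub_natCast_ne_zero {k ℓ : Fin N} (hkℓ : k ≠ ℓ) :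
    ((k : ℕ) - (ℓ : ℕ) : ZMod N) ≠ 0 := by
  rw [sub_ne_zero, Ne, ZMod.natCast_eq_natCast_iff', Nat.mod_eq_of_lt k.isLt,
    Nat.mod_eq_of_lt ℓ.isLt]
  exact Fin.val_injective.ne hkℓ

lemma singleDistVec_iff_distProfile [NeZero N] {h : Fin d → ℕ} {x : Fin N → Fin d → ℝ}
    (hx : ∀ k i, x k i = Int.fract ((h i : ℝ) * ((k : ℕ) : ℝ) / N)) :
    singleDistVec x ↔ ∀ t t' : ZMod N, t ≠ 0 → t' ≠ 0 →
      distProfile (fun i => (h i : ZMod N)) t = distProfile (fun i => (h i : ZMod N)) t' := by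
  have hdiv : Function.Injective fun j : ℕ => (j : ℝ) / N := fun a b hab => by
    have hN : (N : ℝ) ≠ 0 := NeZero.ne _
    exact_mod_cast (div_left_inj' hN).1 hab
  simp only [singleDistVec, distVec_eq_map_distProfile hx]
  constructor
  · intro hsingle t t' ht ht'
    obtain ⟨k, ℓ, hkℓ, rfl⟩ := exists_natCast_sub_natCast_eq ht
    obtain ⟨k', ℓ', hkℓ', rfl⟩ := exists_natCast_sub_natCast_eq ht'
    exact Multiset.map_injective hdiv (hsingle k ℓ k' ℓ' hkℓ hkℓ')
  · intro hM k ℓ k' ℓ' hkℓ hkℓ'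
    rw [hM _ _ (natCast_sub_natCast_ne_zero hkℓ) (natCast_sub_natCast_ne_zero hkℓ')]

lemma count_distProfile_mul (c : Fin d → ZMod N) {t : ZMod N} (ht : IsUnit t) (u : ZMod N) :
    (distProfile c t).count (u * t).valMinAbs.natAbs
      = (distProfile c 1).count u.valMinAbs.natAbs := by
  simp only [count_distProfile, mul_one, ZMod.natAbs_valMinAbs_mul_eq_iff ht]

lemma prime_of_distProfile_eq (hN : 2 ≤ N) {c : Fin d → ZMod N} (hc : ∀ i, IsUnit (c i))
    (i₀ : Fin d) (hM : ∀ t t' : ZMod N, t ≠ 0 → t' ≠ 0 → distProfile c t = distProfile c t') :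
    N.Prime := by
  have : Fact (1 < N) := ⟨hN⟩
  by_contra hp
  have hq := Nat.minFac_prime (show N ≠ 1 by omega)
  have hqN : N.minFac < N := (Nat.not_prime_iff_minFac_lt hN).1 hp
  have hq₀ : (N.minFac : ZMod N) ≠ 0 := by
    rw [Ne, ZMod.natCast_eq_zero_iff]
    exact fun hdvd => (Nat.le_of_dvd hq.pos hdvd).not_gt hqN
  have hq_unit : ¬IsUnit (N.minFac : ZMod N) := by
    rw [ZMod.isUnit_prime_iff_not_dvd hq, not_not]
    exact N.minFac_dvd
  have hmem : (c i₀ * N.minFac).valMinAbs.natAbs ∈ distProfile c 1 :=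
    hM _ 1 hq₀ one_ne_zero ▸ Multiset.mem_map_of_mem _ (mem_univ_val i₀)
  obtain ⟨i, -, hi⟩ := Multiset.mem_map.1 hmem
  rw [mul_one, ZMod.natAbs_valMinAbs_eq_natAbs_valMinAbs] at hi
  have : IsUnit (c i₀ * N.minFac) := by
    rcases hi with hi | hi
    · exact hi ▸ hc i
    · exact IsUnit.neg_iff _ |>.1 (hi ▸ hc i)
  exact hq_unit (IsUnit.mul_iff.1 this).2

lemma distProfile_eq_iff_count_eq {p : ℕ} [Fact p.Prime] {c : Fin d → ZMod p}
    (hc : ∀ i, c i ≠ 0) :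
    (∀ t t' : ZMod p, t ≠ 0 → t' ≠ 0 → distProfile c t = distProfile c t') ↔
      ∀ u v : ZMod p, u ≠ 0 → v ≠ 0 →
        (distProfile c 1).count u.valMinAbs.natAbs =
          (distProfile c 1).count v.valMinAbs.natAbs := by
  constructor
  · intro hM u v hu hv
    have ht : v⁻¹ * u ≠ 0 := mul_ne_zero (inv_ne_zero hv) hu
    rw [← count_distProfile_mul c ht.isUnit v, mul_inv_cancel_left₀ hv, hM _ 1 ht one_ne_zero]
  · intro hcount t t' ht ht'
    suffices ∀ s : ZMod p, s ≠ 0 → distProfile c s = distProfile c 1 by rw [this t ht, this t' ht']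
    intro s hs
    ext j
    by_cases hj : ∃ u : ZMod p, u ≠ 0 ∧ u.valMinAbs.natAbs = j
    · obtain ⟨u, hu, rfl⟩ := hj
      calc (distProfile c s).count u.valMinAbs.natAbs
          = (distProfile c s).count (u * s⁻¹ * s).valMinAbs.natAbs := by
            rw [inv_mul_cancel_right₀ hs]
        _ = (distProfile c 1).count (u * s⁻¹).valMinAbs.natAbs :=
            count_distProfile_mul c hs.isUnit _
        _ = (distProfile c 1).count u.valMinAbs.natAbs :=
            hcount _ _ (mul_ne_zero hu (inv_ne_zero hs)) hu
    · have hj_notMem (r : ZMod p) (hr : r ≠ 0) : j ∉ distProfile c r := by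
        intro hj'
        obtain ⟨i, -, rfl⟩ := Multiset.mem_map.1 hj'
        exact hj ⟨_, mul_ne_zero (hc i) hr, rfl⟩
      rw [Multiset.count_eq_zero_of_notMem (hj_notMem s hs),
        Multiset.count_eq_zero_of_notMem (hj_notMem 1 one_ne_zero)]

lemma distProfile_eq_iff_count_eq_count_one {p : ℕ} [Fact p.Prime] {c : Fin d → ZMod p}
    (hc : ∀ i, c i ≠ 0) :
    (∀ t t' : ZMod p, t ≠ 0 → t' ≠ 0 → distProfile c t = distProfile c t') ↔
      ∀ j ∈ Icc 1 (p / 2), (distProfile c 1).count j = (distProfile c 1).count 1 := by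
  rw [distProfile_eq_iff_count_eq hc]
  constructor
  · intro hcount j hj
    obtain ⟨u, hu, rfl⟩ := ZMod.exists_ne_zero_natAbs_valMinAbs_eq hj
    have h₁ : 1 ∈ Icc 1 (p / 2) := mem_Icc.2 ⟨le_rfl, (mem_Icc.1 hj).1.trans (mem_Icc.1 hj).2⟩
    obtain ⟨v, hv, hv₁⟩ := ZMod.exists_ne_zero_natAbs_valMinAbs_eq h₁
    rw [← hv₁]
    exact hcount u v hu hv
  · intro hcount u v hu hv
    rw [hcount _ (ZMod.natAbs_valMinAbs_mem_Icc hu), hcount _ (ZMod.natAbs_valMinAbs_mem_Icc hv)]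

lemma card_filter_eq_count_distProfile [NeZero N] (h : Fin d → ℕ) {j : ℕ} (hj : j ≤ N / 2) :
    #{i | h i % N = j ∨ h i % N = N - j} = (distProfile (fun i => (h i : ZMod N)) 1).count j := by
  simp only [count_distProfile, mul_one, ZMod.natAbs_valMinAbs_natCast_eq_iff hj]

lemma sum_count_distProfile [NeZero N] {c : Fin d → ZMod N} (hc : ∀ i, c i ≠ 0) :
    ∑ j ∈ Icc 1 (N / 2), (distProfile c 1).count j = d := by
  have hmem : ∀ j ∈ distProfile c 1, j ∈ Icc 1 (N / 2) := by
    intro j hj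
    obtain ⟨i, -, rfl⟩ := Multiset.mem_map.1 hj
    exact ZMod.natAbs_valMinAbs_mem_Icc (by rw [mul_one]; exact hc i)
  rw [Multiset.sum_count_eq_card hmem, distProfile, Multiset.card_map, card_val, card_univ,
    Fintype.card_fin]

end Lattice

/-- Classification of integration lattices with a single distance vector: an
`N`-point integration lattice in `𝕋^d` (`N ≥ 3`) with generating vector
`(h_1/N,…,h_d/N)`, `gcd(h_i,N) = 1`, has a single distance vector if and only
if `N` is prime and, up to torus symmetries (permuting coordinates and
replacing `x` by `1−x`, i.e. `h_i` by `N−h_i`), the generating vector equals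
`(1/N,…,1/N, 2/N,…,2/N, …, n/N,…,n/N)` with `N = 2n+1`, each value repeated
`m` times, and `d = mn`; equivalently, for each `j = 1,…,n` exactly `m`
coordinates satisfy `h_i ≡ ±j (mod N)`. -/
theorem lattice_single_distVec_iff (N d : ℕ) (hN : 3 ≤ N) (hd : 1 ≤ d)
    (h : Fin d → ℕ) (hcop : ∀ i, Nat.Coprime (h i) N)
    (x : Fin N → Fin d → ℝ)
    (hx : ∀ k i, x k i = Int.fract ((h i : ℝ) * ((k : ℕ) : ℝ) / N)) :
    singleDistVec x ↔
      Nat.Prime N ∧ ∃ n m : ℕ, N = 2 * n + 1 ∧ d = m * n ∧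
        ∀ j : ℕ, 1 ≤ j → j ≤ n →
          (Finset.univ.filter
            (fun i : Fin d => h i % N = j ∨ h i % N = N - j)).card = m := by
  have : Fact (1 < N) := ⟨by omega⟩
  set c : Fin d → ZMod N := fun i => (h i : ZMod N)
  have hunit (i : Fin d) : IsUnit (c i) := (ZMod.isUnit_iff_coprime _ _).2 (hcop i)
  have hc (i : Fin d) : c i ≠ 0 := (hunit i).ne_zero
  set F := distProfile c 1
  rw [singleDistVec_iff_distProfile hx]
  constructor
  · intro hM
    have hp := prime_of_distProfile_eq (by omega) hunit ⟨0, hd⟩ hM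
    have : Fact N.Prime := ⟨hp⟩
    have hodd := Nat.odd_iff.1 (hp.odd_of_ne_two (by omega))
    have hfiber := (distProfile_eq_iff_count_eq_count_one hc).1 hM
    refine ⟨hp, N / 2, F.count 1, by omega, ?_, fun j hj₁ hjn => ?_⟩
    · rw [← sum_count_distProfile hc, sum_congr rfl hfiber, sum_const, Nat.card_Icc, smul_eq_mul,
        Nat.add_sub_cancel, mul_comm]
    · rw [card_filter_eq_count_distProfile h (by omega), hfiber j (mem_Icc.2 ⟨hj₁, by omega⟩)]
  · rintro ⟨hp, n, m, hn, -, hm⟩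
    have : Fact N.Prime := ⟨hp⟩
    have hfiber : ∀ j ∈ Icc 1 (N / 2), F.count j = m := fun j hj => by
      obtain ⟨hj₁, hj₂⟩ := mem_Icc.1 hj
      rw [← card_filter_eq_count_distProfile h hj₂, hm j hj₁ (by omega)]
    refine (distProfile_eq_iff_count_eq_count_one hc).2 fun j hj => ?_
    rw [hfiber j hj, hfiber 1 (mem_Icc.2 ⟨le_rfl, by omega⟩)]
end
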